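/- Let (d_{n,k}) = (g, f) be a Riordan type array and let (z_j)_{j≥0} be its Z-sequence, i.e. Z = Σ_{j≥0} z_j t^j satisfies g·(1 − t·Z(t·f)) = g(0). Then for all n ≥ 1: d_{n,0} = z_0^n d_{0,0} + Σ_{i=1}^{n−1} Σ_{j=1}^{n−i} z_0^{i−1} z_j d_{n−j−i, j}. -/

import Mathlib

open PowerSeries Finset

/-- Formal substitution `F(u)`: for `u` with zero constant term, the `n`-th coefficient of
`F(u)` is `∑_{k ≤ n} F_k · [t^n] u^k`. -/
noncomputable def psComp {K : Type*} [CommRing K] (F u : K⟦X⟧) : K⟦X⟧ :=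
  PowerSeries.mk fun n => ∑ k ∈ Finset.range (n + 1), coeff k F * coeff n (u ^ k)

/-!
Comparing the coefficients of `t^(m+1)` in `g · (1 - t · Z(t f)) = g(0)` gives the one-step
recurrence `d_{m+1,0} = z_0 d_{m,0} + ∑_{j=1}^{m} z_j d_{m-j,j}`; the claim is this linear
recurrence for `d_{·,0}` unrolled down to `d_{0,0}`.
-/

section

variable {R : Type*} [CommRing R]

lemma coeff_pow_eq_zero_of_lt {u : R⟦X⟧} (hu : constantCoeff u = 0) {n k : ℕ} (h : n < k) :
    coeff n (u ^ k) = 0 :=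
  X_pow_dvd_iff.1 (pow_dvd_pow_of_dvd (X_dvd_iff.2 hu) k) n h

-- Since `X ∣ u`, the terms `k > n` omitted from `coeff n (psComp F u)` vanish anyway.
lemma coeff_mul_psComp (F g u : R⟦X⟧) (hu : constantCoeff u = 0) (m : ℕ) :
    coeff m (g * psComp F u) = ∑ k ∈ range (m + 1), coeff k F * coeff m (g * u ^ k) := by
  have hpsComp : ∀ q ≤ m, coeff q (psComp F u) =
      ∑ k ∈ range (m + 1), coeff k F * coeff q (u ^ k) := fun q hq => by
    rw [psComp, coeff_mk]
    refine sum_subset (range_subset_range.2 (by omega)) fun k _ hk => ?_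
    rw [coeff_pow_eq_zero_of_lt hu (by simpa using hk), mul_zero]
  simp_rw [coeff_mul, mul_sum]
  rw [sum_comm]
  refine sum_congr rfl fun p hp => ?_
  rw [hpsComp p.2 (by rw [HasAntidiagonal.mem_antidiagonal] at hp; omega), mul_sum]
  exact sum_congr rfl fun k _ => by ring

lemma coeff_succ_eq_sum_of_mul_one_sub_X_mul_psComp (g f F : R⟦X⟧)
    (hF : g * (1 - X * psComp F (X * f)) = C (constantCoeff g)) (m : ℕ) :
    coeff (m + 1) g = ∑ k ∈ range (m + 1), coeff k F * coeff (m - k) (g * f ^ k) := by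
  have h := congrArg (coeff (m + 1)) hF
  rw [coeff_C, if_neg m.succ_ne_zero, mul_sub, mul_one, mul_left_comm, map_sub,
    coeff_succ_X_mul, sub_eq_zero, coeff_mul_psComp F g _ (by simp)] at h
  rw [h]
  refine sum_congr rfl fun k hk => ?_
  rw [mul_pow, mul_left_comm, coeff_X_pow_mul', if_pos (by simpa [Nat.lt_succ_iff] using hk)]

lemma eq_pow_mul_add_sum_of_succ_eq (a b : ℕ → R) (c : R)
    (h : ∀ m, a (m + 1) = c * a m + b m) (n : ℕ) :
    a n = c ^ n * a 0 + ∑ i ∈ range n, c ^ i * b (n - 1 - i) := by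
  induction n with
  | zero => simp
  | succ n ih =>
    rw [h, ih, sum_range_succ', mul_add, mul_sum, ← mul_assoc, ← pow_succ']
    simp only [pow_zero, one_mul, Nat.add_sub_cancel, Nat.sub_zero, ← mul_assoc, ← pow_succ']
    have hshift : ∀ i ∈ range n, c ^ (i + 1) * b (n - 1 - i) = c ^ (i + 1) * b (n - (i + 1)) :=
      fun i _ => by rw [Nat.sub_sub, add_comm 1 i]
    rw [sum_congr rfl hshift]
    ring

end

theorem stmt8_general {K : Type*} [Field K]
    (g f : K⟦X⟧)
    (d : ℕ → ℕ → K) (hd : ∀ n k, d n k = coeff n (g * f ^ k))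
    (z : ℕ → K)
    (hz : g * (1 - X * psComp (PowerSeries.mk z) (X * f)) = C (constantCoeff g)) :
    ∀ n, 1 ≤ n →
      d n 0 = z 0 ^ n * d 0 0 +
        ∑ i ∈ Finset.Icc 1 (n - 1), ∑ j ∈ Finset.Icc 1 (n - i),
          z 0 ^ (i - 1) * z j * d (n - j - i) j := by
  have hrec : ∀ m, d (m + 1) 0 = z 0 * d m 0 + ∑ j ∈ Icc 1 m, z j * d (m - j) j := fun m => by
    simp only [hd, pow_zero, mul_one]
    rw [coeff_succ_eq_sum_of_mul_one_sub_X_mul_psComp g f _ hz, range_eq_Ico,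
      sum_eq_sum_Ico_succ_bot (by omega : 0 < m + 1), Ico_add_one_right_eq_Icc]
    simp
  rintro n hn
  obtain ⟨m, rfl⟩ := Nat.exists_eq_add_of_le' hn
  rw [eq_pow_mul_add_sum_of_succ_eq (fun n => d n 0) _ _ hrec (m + 1), sum_range_succ,
    Nat.add_sub_cancel, Nat.sub_self, Icc_eq_empty_of_lt one_pos, sum_empty, mul_zero, add_zero,
    ← Ico_add_one_right_eq_Icc 1 m, sum_Ico_eq_sum_range, Nat.add_sub_cancel]
  congr 1
  refine sum_congr rfl fun i _ => ?_
  rw [show m + 1 - (1 + i) = m - i by omega, mul_sum]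
  refine sum_congr rfl fun j _ => ?_
  rw [show m + 1 - j - (1 + i) = m - i - j by omega, Nat.add_sub_cancel_left, mul_assoc]

/-- Iterated form of the `Z`-sequence recurrence for a Riordan type array `(g, f)`. -/
theorem stmt8 {K : Type*} [Field K] [CharZero K]
    (g f : K⟦X⟧) (hg0 : constantCoeff g ≠ 0) (hf0 : constantCoeff f ≠ 0)
    (d : ℕ → ℕ → K) (hd : ∀ n k, d n k = coeff n (g * f ^ k))
    (z : ℕ → K)
    (hz : g * (1 - X * psComp (PowerSeries.mk z) (X * f)) = C (constantCoeff g)) :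
    ∀ n, 1 ≤ n →
      d n 0 = z 0 ^ n * d 0 0 +
        ∑ i ∈ Finset.Icc 1 (n - 1), ∑ j ∈ Finset.Icc 1 (n - i),
          z 0 ^ (i - 1) * z j * d (n - j - i) j :=
  stmt8_general g f d hd z hz
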